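/- Monotonicity of the heap domain under reduction: if (X, Φ, e) reduces to (X', Φ', v) in the SHAPES big-step semantics, then dom X ⊆ dom X', and for every pool address π ∈ dom X, the layout identifier and stored pool-parameter addresses of the pool at π are unchanged in X' (only clusters may grow or have field slots updated). -/

import Mathlib

namespace Shapes

abbrev FieldId := ℕ
abbrev VarId := ℕ
abbrev ClassId := ℕ
abbrev LayoutId := ℕ
abbrev MethodId := ℕ

/-- A pool address: `none` is the global none-pool, `some n` a heap pool address. -/
abbrev PoolAddr := Option ℕ

inductive Value where
  | null
  | obj (ω : ℕ)
  | loc (π : ℕ) (n : ℕ)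
deriving DecidableEq

/-- A pool variable: `none` is the `none` keyword. -/
abbrev PoolVar := Option VarId

inductive RVal where
  | val (v : Value)
  | pool (π : PoolAddr)
deriving DecidableEq

abbrev Frame := VarId → Option RVal

/-- The value of a pool variable in a frame. -/
def poolOf (Φ : Frame) : PoolVar → Option PoolAddr
  | none => some none
  | some y => match Φ y with
    | some (RVal.pool π) => some π
    | _ => none

structure Obj where
  cls : ClassId
  params : List PoolAddr
  record : List Value

structure Pool where
  layout : LayoutId
  params : List PoolAddr
  clusters : List (List (List Value))

abbrev Heap := ℕ → Option (Obj ⊕ Pool)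

inductive Expr where
  | null
  | var (x : VarId)
  | newE (C : ClassId) (ys : List PoolVar)
  | call (x : VarId) (m : MethodId) (x' : VarId)
  | read (x : VarId) (f : FieldId)
  | write (x : VarId) (f : FieldId) (x' : VarId)
  | assign (x : VarId) (e : Expr)

structure MethodDecl where
  param : VarId
  paramTy : ClassId × List PoolVar
  retTy : ClassId × List PoolVar
  pools : List (VarId × LayoutId × List PoolVar)
  locals : List (VarId × ClassId × List PoolVar)
  body : Expr

structure ClassDecl where
  params : List (VarId × ClassId × List PoolVar)
  fields : List (FieldId × ClassId × List PoolVar)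
  methods : List MethodDecl

structure LayoutDecl where
  cls : ClassId
  clusters : List (List FieldId)

structure Program where
  classes : ClassId → Option ClassDecl
  layouts : LayoutId → Option LayoutDecl

def owners (cd : ClassDecl) : List VarId := cd.params.map (·.1)

def layoutClass (P : Program) (L : LayoutId) : Option ClassId :=
  (P.layouts L).map (·.cls)

def flookup (cd : ClassDecl) (f : FieldId) : Option (ClassId × List PoolVar) :=
  (cd.fields.find? (fun p => p.1 == f)).map (·.2)

def fieldsOf (cd : ClassDecl) : List FieldId := cd.fields.map (·.1)

def mlookup (cd : ClassDecl) (m : MethodId) : Option MethodDecl := cd.methods[m]?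

/-- Offset of a field in an unpooled object. -/
def offsetC (cd : ClassDecl) (f : FieldId) : Option ℕ :=
  (fieldsOf cd).idxOf? f

/-- Offset `(i, j)` of a field in a layout: cluster index `i`, position `j`. -/
def offsetL (ld : LayoutDecl) (f : FieldId) : Option (ℕ × ℕ) :=
  (ld.clusters.findIdx? (fun κ => κ.contains f)).bind fun i =>
    ((ld.clusters.getD i []).idxOf? f).map fun j => (i, j)

/-- Substitution of formal pool parameters by pool addresses. -/
def substPA (formals : List VarId) (πs : List PoolAddr) : PoolVar → PoolAddr
  | none => none
  | some y => match formals.idxOf? y with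
    | some i => πs.getD i none
    | none => none

/-- Substitution of formal pool parameters by pool variables (actuals). -/
def substPV (formals : List VarId) (actuals : List PoolVar) : PoolVar → PoolVar
  | none => none
  | some y => match formals.idxOf? y with
    | some i => actuals.getD i none
    | none => none

/-- Weak agreement of a value with a runtime class type `C<πs>`. -/
def wagreeVal (P : Program) (X : Heap) : Value → ClassId → List PoolAddr → Prop
  | .null, _, _ => True
  | .obj ω, C, πs => ∃ o, X ω = some (.inl o) ∧ o.cls = C ∧ o.params = πs ∧
      πs.head? ≠ some none
  | .loc π _, C, πs => ∃ p, X π = some (.inr p) ∧ p.params = πs ∧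
      πs.head? = some (some π) ∧ layoutClass P p.layout = some C

/-- Weak agreement of a pool address with a runtime bound `[C<πs>]`. -/
def wagreeBound (P : Program) (X : Heap) : PoolAddr → ClassId → List PoolAddr → Prop
  | none, _, _ => True
  | some π, C, πs => ∃ p, X π = some (.inr p) ∧ p.params = πs ∧
      πs.head? = some (some π) ∧ layoutClass P p.layout = some C

/-- Weak agreement of a pool address with a runtime pool type `L<πs>`. -/
def wagreePoolTy (P : Program) (X : Heap) (_π : PoolAddr) (L : LayoutId)
    (πs : List PoolAddr) : Prop :=
  ∃ π₀ p, πs.head? = some (some π₀) ∧ X π₀ = some (.inr p) ∧ p.layout = L ∧ p.params = πs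

def paramsAgree (P : Program) (X : Heap) (cd : ClassDecl) (πs : List PoolAddr) : Prop :=
  ∀ i (h : i < cd.params.length),
    wagreeBound P X (πs.getD i none)
      (cd.params.get ⟨i, h⟩).2.1
      ((cd.params.get ⟨i, h⟩).2.2.map (substPA (owners cd) πs))

def fieldsAgreeRec (P : Program) (X : Heap) (cd : ClassDecl) (πs : List PoolAddr)
    (ρ : List Value) : Prop :=
  ∀ i (h : i < cd.fields.length),
    wagreeVal P X (ρ.getD i .null)
      (cd.fields.get ⟨i, h⟩).2.1
      ((cd.fields.get ⟨i, h⟩).2.2.map (substPA (owners cd) πs))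

/-- The value at cluster `i`, object index `n`, slot `j`. -/
def cluster3 (κs : List (List (List Value))) (i n j : ℕ) : Value :=
  ((κs.getD i []).getD n []).getD j .null

/-- Strong agreement of the pooled object at `(π, n)` with `C<πs>`. -/
def sagreeLoc (P : Program) (X : Heap) (π n : ℕ) (C : ClassId) (πs : List PoolAddr) : Prop :=
  ∃ p cd ld, X π = some (.inr p) ∧ p.params = πs ∧ πs.head? = some (some π) ∧
    P.layouts p.layout = some ld ∧ ld.cls = C ∧ P.classes C = some cd ∧
    ∀ f i j D zs, offsetL ld f = some (i, j) → flookup cd f = some (D, zs) →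
      wagreeVal P X (cluster3 p.clusters i n j) D (zs.map (substPA (owners cd) πs))

/-- Strong agreement of the unpooled object at `ω` with `C<πs>`. -/
def sagreeObjAddr (P : Program) (X : Heap) (ω : ℕ) (C : ClassId) (πs : List PoolAddr) : Prop :=
  ∃ o cd, X ω = some (.inl o) ∧ o.cls = C ∧ o.params = πs ∧ πs.head? = some none ∧
    P.classes C = some cd ∧ paramsAgree P X cd πs ∧ fieldsAgreeRec P X cd πs o.record

/-- Strong agreement of the pool at `π` with `L<πs>`. -/
def sagreePoolAddr (P : Program) (X : Heap) (π : ℕ) (L : LayoutId) (πs : List PoolAddr) : Prop :=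
  ∃ p ld cd, X π = some (.inr p) ∧ p.layout = L ∧ p.params = πs ∧
    πs.head? = some (some π) ∧
    P.layouts L = some ld ∧ P.classes ld.cls = some cd ∧
    paramsAgree P X cd πs ∧
    (∀ κ ∈ p.clusters, κ.length = (p.clusters.headD []).length) ∧
    (∀ n, n < (p.clusters.headD []).length → sagreeLoc P X π n ld.cls πs)

/-- A well-formed heap: every address strongly agrees with some runtime type. -/
def wfHeap (P : Program) (X : Heap) : Prop :=
  ∀ a e, X a = some e →
    (∃ C πs, sagreeObjAddr P X a C πs) ∨ (∃ L πs, sagreePoolAddr P X a L πs)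

inductive Ty where
  | obj (C : ClassId) (ys : List PoolVar)
  | pool (L : LayoutId) (ys : List PoolVar)
  | bound (C : ClassId) (ys : List PoolVar)
deriving DecidableEq

abbrev Ctx := VarId → Option Ty

mutual
/-- Well-formedness of the bound `[C<ys>]` in a context. -/
inductive WfBound (P : Program) (Γ : Ctx) : ClassId → List PoolVar → Prop where
  | mk : ∀ C ys cd, P.classes C = some cd →
      (∀ i (h : i < cd.params.length),
        PoolBoundTy P Γ (ys.getD i none)
          (cd.params.get ⟨i, h⟩).2.1
          ((cd.params.get ⟨i, h⟩).2.2.map (substPV (owners cd) ys))) →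
      WfBound P Γ C ys

/-- A pool variable has a given bound type. -/
inductive PoolBoundTy (P : Program) (Γ : Ctx) : PoolVar → ClassId → List PoolVar → Prop where
  | noneB : ∀ C ys, WfBound P Γ C ys → PoolBoundTy P Γ none C ys
  | fromBound : ∀ v C ys, Γ v = some (.bound C ys) → PoolBoundTy P Γ (some v) C ys
  | fromPool : ∀ v L C ys, Γ v = some (.pool L ys) → layoutClass P L = some C →
      PoolBoundTy P Γ (some v) C ys
end

def WfObjTy (P : Program) (Γ : Ctx) (C : ClassId) (ys : List PoolVar) : Prop :=
  WfBound P Γ C ys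

def WfPoolTy (P : Program) (Γ : Ctx) (L : LayoutId) (ys : List PoolVar) : Prop :=
  ∃ C, WfBound P Γ C ys ∧ layoutClass P L = some C

/-- Expression typing: `Γ ⊢ e : C<ys>`. -/
inductive HasTy (P : Program) (Γ : Ctx) : Expr → ClassId → List PoolVar → Prop where
  | null : ∀ C ys, WfBound P Γ C ys → HasTy P Γ .null C ys
  | var : ∀ x C ys, Γ x = some (.obj C ys) → HasTy P Γ (.var x) C ys
  | assign : ∀ x e C ys, Γ x = some (.obj C ys) → HasTy P Γ e C ys →
      HasTy P Γ (.assign x e) C ys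
  | newE : ∀ C ys, WfBound P Γ C ys → HasTy P Γ (.newE C ys) C ys
  | read : ∀ x f C ys cd D zs, Γ x = some (.obj C ys) → P.classes C = some cd →
      flookup cd f = some (D, zs) →
      HasTy P Γ (.read x f) D (zs.map (substPV (owners cd) ys))
  | write : ∀ x f x' C ys cd D zs, Γ x = some (.obj C ys) → P.classes C = some cd →
      flookup cd f = some (D, zs) →
      Γ x' = some (.obj D (zs.map (substPV (owners cd) ys))) →
      HasTy P Γ (.write x f x') D (zs.map (substPV (owners cd) ys))
  | call : ∀ x m x' C ys cd md, Γ x = some (.obj C ys) → P.classes C = some cd →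
      mlookup cd m = some md →
      Γ x' = some (.obj md.paramTy.1 (md.paramTy.2.map (substPV (owners cd) ys))) →
      HasTy P Γ (.call x m x') md.retTy.1 (md.retTy.2.map (substPV (owners cd) ys))

/-- A run-time value agrees with a (static) type instantiated via the frame. -/
def agreeTy (P : Program) (X : Heap) (Φ : Frame) (r : RVal) : Ty → Prop
  | .obj C ys => ∃ v πs, r = .val v ∧ ys.mapM (poolOf Φ) = some πs ∧ wagreeVal P X v C πs
  | .pool L ys => ∃ π πs, r = .pool π ∧ ys.mapM (poolOf Φ) = some πs ∧
      wagreePoolTy P X π L πs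
  | .bound C ys => ∃ π πs, r = .pool π ∧ ys.mapM (poolOf Φ) = some πs ∧
      wagreeBound P X π C πs

/-- Well-formed configuration `Γ ⊢ X, Φ`. -/
def wfConfig (P : Program) (Γ : Ctx) (X : Heap) (Φ : Frame) : Prop :=
  wfHeap P X ∧ (∀ x, (Γ x).isSome ↔ (Φ x).isSome) ∧
  ∀ x T, Γ x = some T → ∃ r, Φ x = some r ∧ agreeTy P X Φ r T

def updHeap (X : Heap) (a : ℕ) (e : Obj ⊕ Pool) : Heap :=
  fun b => if b = a then some e else X b

def updFrame (Φ : Frame) (x : VarId) (r : RVal) : Frame :=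
  fun z => if z = x then some r else Φ z

def updCtx (Γ : Ctx) (x : VarId) (T : Ty) : Ctx :=
  fun z => if z = x then some T else Γ z

/-- `this` is a distinguished variable. -/
def thisVar : VarId := 0

/-- Append one fresh record of nulls to each cluster (pooled allocation). -/
def appendNulls (κs : List (List (List Value))) (fss : List (List FieldId)) :
    List (List (List Value)) :=
  List.zipWith (fun κ fs => κ ++ [List.replicate fs.length Value.null]) κs fss

/-- Update slot `(i, n, j)` in the clusters of a pool. -/
def setCluster (κs : List (List (List Value))) (i n j : ℕ) (v : Value) :
    List (List (List Value)) :=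
  κs.set i ((κs.getD i []).set n (((κs.getD i []).getD n []).set j v))

def getThis (P : Program) (X : Heap) : Value → Option (ClassId × List PoolAddr)
  | .obj ω => (X ω).bind fun e => match e with
      | .inl o => some (o.cls, o.params)
      | .inr _ => none
  | .loc π _ => (X π).bind fun e => match e with
      | .inr p => (layoutClass P p.layout).map fun C => (C, p.params)
      | .inl _ => none
  | .null => none

/-- The frame a method starts with: `this`, the parameter, and the class pool params. -/
def methodFrame (md : MethodDecl) (thisv : Value) (arg : RVal)
    (ownersC : List VarId) (πs : List PoolAddr) : Frame :=
  fun z =>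
    if z = thisVar then some (.val thisv)
    else if z = md.param then some arg
    else match ownersC.idxOf? z with
      | some i => some (.pool (πs.getD i none))
      | none => none

/-- Extend a method frame with its local pool and object variables. -/
def extendDecls (Φ : Frame) (πas : List ℕ) (md : MethodDecl) : Frame :=
  fun z =>
    match (md.pools.map (·.1)).idxOf? z with
    | some i => some (.pool (some (πas.getD i 0)))
    | none => match (md.locals.map (·.1)).idxOf? z with
      | some _ => some (.val .null)
      | none => Φ z

/-- Big-step operational semantics of SHAPES. -/
inductive Red (P : Program) : Heap → Frame → Expr → Heap → Frame → Value → Prop where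
  | nullR : ∀ X Φ, Red P X Φ .null X Φ .null
  | varR : ∀ X Φ x v, Φ x = some (.val v) → Red P X Φ (.var x) X Φ v
  | assignR : ∀ X Φ x e X' Φ' v, Red P X Φ e X' Φ' v →
      Red P X Φ (.assign x e) X' (updFrame Φ' x (.val v)) v
  | newObjR : ∀ X Φ C ys πs ω cd,
      ys.mapM (poolOf Φ) = some πs → πs.head? = some none →
      X ω = none → P.classes C = some cd →
      Red P X Φ (.newE C ys)
        (updHeap X ω (.inl ⟨C, πs, List.replicate cd.fields.length .null⟩)) Φ (.obj ω)
  | newPoolR : ∀ X Φ C ys πs π p ld,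
      ys.mapM (poolOf Φ) = some πs → πs.head? = some (some π) →
      X π = some (.inr p) → P.layouts p.layout = some ld →
      Red P X Φ (.newE C ys)
        (updHeap X π (.inr ⟨p.layout, p.params, appendNulls p.clusters ld.clusters⟩))
        Φ (.loc π (p.clusters.headD []).length)
  | readObjR : ∀ X Φ x f ω o cd i,
      Φ x = some (.val (.obj ω)) → X ω = some (.inl o) →
      P.classes o.cls = some cd → offsetC cd f = some i →
      Red P X Φ (.read x f) X Φ (o.record.getD i .null)
  | readPoolR : ∀ X Φ x f π n p ld i j,
      Φ x = some (.val (.loc π n)) → X π = some (.inr p) →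
      P.layouts p.layout = some ld → offsetL ld f = some (i, j) →
      Red P X Φ (.read x f) X Φ (cluster3 p.clusters i n j)
  | writeObjR : ∀ X Φ x f x' ω o cd i v,
      Φ x = some (.val (.obj ω)) → Φ x' = some (.val v) →
      X ω = some (.inl o) → P.classes o.cls = some cd → offsetC cd f = some i →
      Red P X Φ (.write x f x')
        (updHeap X ω (.inl ⟨o.cls, o.params, o.record.set i v⟩)) Φ v
  | writePoolR : ∀ X Φ x f x' π n p ld i j v,
      Φ x = some (.val (.loc π n)) → Φ x' = some (.val v) →
      X π = some (.inr p) → P.layouts p.layout = some ld → offsetL ld f = some (i, j) →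
      Red P X Φ (.write x f x')
        (updHeap X π (.inr ⟨p.layout, p.params, setCluster p.clusters i n j v⟩)) Φ v
  | callR : ∀ X Φ x m x'' v arg C πs cd md Φ₀ πas Φ₁ (X₁ : Heap) X' Φ' v',
      Φ x = some (.val v) →
      getThis P X v = some (C, πs) →
      P.classes C = some cd → mlookup cd m = some md →
      Φ x'' = some arg →
      Φ₀ = methodFrame md v arg (owners cd) πs →
      πas.length = md.pools.length → πas.Nodup →
      (∀ π ∈ πas, X π = none) →
      Φ₁ = extendDecls Φ₀ πas md →
      (∀ i (h : i < md.pools.length),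
        ∃ ld πs', P.layouts (md.pools.get ⟨i, h⟩).2.1 = some ld ∧
          ((md.pools.get ⟨i, h⟩).2.2).mapM (poolOf Φ₁) = some πs' ∧
          X₁ (πas.getD i 0) = some (.inr ⟨(md.pools.get ⟨i, h⟩).2.1, πs',
            List.replicate ld.clusters.length []⟩)) →
      (∀ a, a ∉ πas → X₁ a = X a) →
      Red P X₁ Φ₁ md.body X' Φ' v' →
      Red P X Φ (.call x m x'') X' Φ v'

/-- The typing context arising from a class's pool parameter declarations. -/
def ctxOfClass (cd : ClassDecl) : Ctx :=
  fun z => (cd.params.find? (fun p => p.1 == z)).map fun p => Ty.bound p.2.1 p.2.2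

/-- The typing context used to check a method body. -/
def ctxOfMethod (C : ClassId) (cd : ClassDecl) (md : MethodDecl) : Ctx :=
  fun z =>
    if z = thisVar then some (.obj C (cd.params.map fun p => some p.1))
    else if z = md.param then some (.obj md.paramTy.1 md.paramTy.2)
    else match md.pools.find? (fun p => p.1 == z) with
    | some p => some (.pool p.2.1 p.2.2)
    | none => match md.locals.find? (fun l => l.1 == z) with
      | some l => some (.obj l.2.1 l.2.2)
      | none => ctxOfClass cd z

/-- A layout declaration is well-formed for a class: its clusters are a
disjoint partition of the class's fields. -/
def wfLayoutDecl (cd : ClassDecl) (ld : LayoutDecl) : Prop :=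
  ld.clusters.flatten.Perm (fieldsOf cd) ∧ ∀ κ ∈ ld.clusters, κ.Nodup

def wfClassDecl (P : Program) (C : ClassId) (cd : ClassDecl) : Prop :=
  WfBound P (ctxOfClass cd) C (cd.params.map fun p => some p.1) ∧
  (∀ fd ∈ cd.fields, WfObjTy P (ctxOfClass cd) fd.2.1 fd.2.2) ∧
  ∀ md ∈ cd.methods,
    WfObjTy P (ctxOfClass cd) md.paramTy.1 md.paramTy.2 ∧
    WfObjTy P (ctxOfClass cd) md.retTy.1 md.retTy.2 ∧
    HasTy P (ctxOfMethod C cd md) md.body md.retTy.1 md.retTy.2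

def wfProgram (P : Program) : Prop :=
  (∀ C cd, P.classes C = some cd → wfClassDecl P C cd) ∧
  (∀ L ld, P.layouts L = some ld →
    ∃ cd, P.classes ld.cls = some cd ∧ wfLayoutDecl cd ld)


def HeapGrows (X X' : Heap) : Prop :=
  (∀ a ea, X a = some ea → ∃ ea', X' a = some ea') ∧
  (∀ π p, X π = some (Sum.inr p) →
    ∃ p', X' π = some (.inr p') ∧ p'.layout = p.layout ∧ p'.params = p.params)

namespace HeapGrows

theorem of_eq_on_dom {X X' : Heap} (h : ∀ a ea, X a = some ea → X' a = X a) :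
    HeapGrows X X' :=
  ⟨fun a ea ha => ⟨ea, (h a ea ha).trans ha⟩,
    fun π p hp => ⟨p, (h π _ hp).trans hp, rfl, rfl⟩⟩

theorem refl (X : Heap) : HeapGrows X X :=
  of_eq_on_dom fun _ _ _ => rfl

theorem trans {X₁ X₂ X₃ : Heap} (h₁₂ : HeapGrows X₁ X₂) (h₂₃ : HeapGrows X₂ X₃) :
    HeapGrows X₁ X₃ := by
  refine ⟨fun a ea ha => ?_, fun π p hp => ?_⟩
  · obtain ⟨ea₂, ha₂⟩ := h₁₂.1 a ea ha
    exact h₂₃.1 a ea₂ ha₂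
  · obtain ⟨p₂, hp₂, hlayout₂, hparams₂⟩ := h₁₂.2 π p hp
    obtain ⟨p₃, hp₃, hlayout₃, hparams₃⟩ := h₂₃.2 π p₂ hp₂
    exact ⟨p₃, hp₃, hlayout₃.trans hlayout₂, hparams₃.trans hparams₂⟩

theorem updHeap {X : Heap} {a : ℕ} {e : Obj ⊕ Pool}
    (hpool : ∀ p, X a = some (.inr p) →
      ∃ p', e = .inr p' ∧ p'.layout = p.layout ∧ p'.params = p.params) :
    HeapGrows X (Shapes.updHeap X a e) := by
  refine ⟨fun b eb hb => ?_, fun π p hp => ?_⟩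
  · by_cases hba : b = a
    · exact ⟨e, by simp [Shapes.updHeap, hba]⟩
    · exact ⟨eb, by simp [Shapes.updHeap, hba, hb]⟩
  · by_cases hπa : π = a
    · subst hπa
      obtain ⟨p', rfl, hlayout, hparams⟩ := hpool p hp
      exact ⟨p', by simp [Shapes.updHeap], hlayout, hparams⟩
    · exact ⟨p, by simp [Shapes.updHeap, hπa, hp], rfl, rfl⟩

end HeapGrows

theorem Red.heapGrows {P : Program} {X X' : Heap} {Φ Φ' : Frame} {e : Expr} {v : Value}
    (h : Red P X Φ e X' Φ' v) : HeapGrows X X' := by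
  induction h with
  | nullR | varR | readObjR | readPoolR => exact .refl _
  | assignR _ _ _ _ _ _ _ _ ih => exact ih
  | newObjR _ _ _ _ _ _ _ _ _ hω _ | writeObjR _ _ _ _ _ _ _ _ _ _ _ _ hω _ _ =>
    exact .updHeap (by simp [hω])
  | newPoolR _ _ _ _ _ _ _ _ _ _ hπ _ | writePoolR _ _ _ _ _ _ _ _ _ _ _ _ _ _ hπ _ _ =>
    exact .updHeap fun _ hp => ⟨_, rfl, by rw [hπ] at hp; cases hp; exact ⟨rfl, rfl⟩⟩
  | callR _ _ _ _ _ _ _ _ _ _ _ _ _ _ _ _ _ _ _ _ _ _ _ _ _ _ hfresh _ _ hkeep _ ih =>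
    -- the method's local pools are allocated at addresses outside `dom X`
    refine HeapGrows.trans (.of_eq_on_dom fun a ea ha => hkeep a fun hmem => ?_) ih
    simp [hfresh a hmem] at ha

/-- Monotonicity of the heap domain under reduction: if `(X, Φ, e)` reduces
to `(X', Φ', v)`, then `dom X ⊆ dom X'`, and every pool address in `dom X`
keeps its layout identifier and stored pool-parameter addresses in `X'`. -/
theorem heap_domain_monotone (P : Program) (X X' : Heap) (Φ Φ' : Frame)
    (e : Expr) (v : Value)
    (h : Red P X Φ e X' Φ' v) :
    (∀ a ea, X a = some ea → ∃ ea', X' a = some ea') ∧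
    (∀ π p, X π = some (Sum.inr p) →
      ∃ p', X' π = some (.inr p') ∧ p'.layout = p.layout ∧
        p'.params = p.params) :=
  h.heapGrows

end Shapes
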